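/- arXiv:0710.0012 — 2 statements merged into one kernel-verified Lean document; each statement's English description precedes it below -/
import Mathlib

section
/- Let F₁, F₂ be holomorphic functions on the strip S_{R₀} = {x+iy ∈ ℂ : |y| < R₀} that are periodic of period 1 (i.e., F_j(z+1)=F_j(z)), and let α : (−R₀, R₀) → ℝ be bounded and measurable. Then for all 0 < R < R₀/2, ∫₀¹ conj(F₁(x)) ∫_{−2R}^{2R} F₂(x+iy) α(y) dy dx = ∫₀¹ ∫_{−2R}^{2R} conj(F₁(x+iy/2)) F₂(x+iy/2) α(y) dy dx. -/
open Complex MeasureTheory Set ComplexConjugate Function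
open scoped Interval

/-!
For fixed `y`, the function `g z = conj (F₁ (conj (z - y I))) * F₂ z` is holomorphic and
`1`-periodic on the closed rectangle `[0, 1] × [y/2, y]`. By Cauchy's theorem its boundary
integral vanishes, and the two vertical sides cancel by periodicity, so the integrals of `g`
over the horizontal sides agree: on `Im z = y` it is `conj (F₁ x) F₂ (x + y I)`, on
`Im z = y/2` it is `conj (F₁ (x + y I / 2)) F₂ (x + y I / 2)`. Integrating this identity
against `α y` and exchanging the order of integration on both sides gives the theorem.
-/

theorem intervalIntegral_swap_mul_of_continuousOn {𝕜 : Type*} [RCLike 𝕜] {G : ℝ → ℝ → 𝕜}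
    {w : ℝ → 𝕜} {a b c d C : ℝ} (hG : ContinuousOn (uncurry G) ([[a, b]] ×ˢ [[c, d]]))
    (hw : AEStronglyMeasurable w) (hwC : ∀ y, ‖w y‖ ≤ C) :
    ∫ x in a..b, ∫ y in c..d, G x y * w y = ∫ y in c..d, ∫ x in a..b, G x y * w y := by
  apply intervalIntegral_intervalIntegral_swap
  have hGint : IntegrableOn (uncurry G) (uIoc a b ×ˢ uIoc c d) :=
    (hG.integrableOn_compact (isCompact_uIcc.prod isCompact_uIcc)).mono_set
      (prod_mono uIoc_subset_uIcc uIoc_subset_uIcc)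
  exact hGint.mul_bdd (c := C) hw.comp_snd.restrict (.of_forall fun p => hwC p.2)

theorem integral_add_mul_I_eq_of_periodic {E : Type*} [NormedAddCommGroup E] [NormedSpace ℂ E]
    [CompleteSpace E] {g : ℂ → E} {p a b : ℝ}
    (hg : DifferentiableOn ℂ g ([[0, p]] ×ℂ [[a, b]]))
    (hper : ∀ t ∈ [[a, b]], g (p + t * I) = g (t * I)) :
    ∫ x in (0 : ℝ)..p, g (x + a * I) = ∫ x in (0 : ℝ)..p, g (x + b * I) := by
  have hrect := integral_boundary_rect_eq_zero_of_differentiableOn g ⟨0, a⟩ ⟨p, b⟩ hg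
  have hvert : ∫ t in a..b, g (p + t * I) = ∫ t in a..b, g ((0 : ℝ) + t * I) :=
    intervalIntegral.integral_congr fun t ht => by simpa using hper t ht
  rwa [hvert, add_sub_cancel_right, sub_eq_zero] at hrect

theorem integral_conj_mul_shift_eq_integral_conj_mul_half_shift {R₀ y : ℝ} {F₁ F₂ : ℂ → ℂ}
    (hF₁ : DifferentiableOn ℂ F₁ {z : ℂ | |z.im| < R₀})
    (hF₂ : DifferentiableOn ℂ F₂ {z : ℂ | |z.im| < R₀})
    (hper₁ : ∀ z : ℂ, |z.im| < R₀ → F₁ (z + 1) = F₁ z)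
    (hper₂ : ∀ z : ℂ, |z.im| < R₀ → F₂ (z + 1) = F₂ z) (hy : |y| < R₀) :
    ∫ x in (0 : ℝ)..1, conj (F₁ x) * F₂ (x + y * I)
      = ∫ x in (0 : ℝ)..1, conj (F₁ (x + y * I / 2)) * F₂ (x + y * I / 2) := by
  have hstrip : IsOpen {z : ℂ | |z.im| < R₀} := isOpen_lt (by fun_prop) continuous_const
  set g : ℂ → ℂ := fun z => (conj ∘ F₁ ∘ conj) (z - y * I) * F₂ z with hg_def
  have hy₂ : |y / 2| < R₀ := by rw [abs_div, abs_two]; linarith [abs_nonneg y]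
  have him : ∀ t ∈ [[y / 2, y]], |t| < R₀ ∧ |y - t| < R₀ := fun t ht =>
    ⟨abs_lt.2 (ordConnected_Ioo.uIcc_subset (abs_lt.1 hy₂) (abs_lt.1 hy) ht),
      (abs_sub_right_of_mem_uIcc ht).trans_lt (by rwa [show y - y / 2 = y / 2 by ring])⟩
  have hg : DifferentiableOn ℂ g ([[0, 1]] ×ℂ [[y / 2, y]]) := by
    intro z hz
    obtain ⟨h₁, h₂⟩ := him z.im hz.2
    have hd₁ : DifferentiableAt ℂ (conj ∘ F₁ ∘ conj) (z - y * I) :=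
      differentiableAt_conj_conj_iff.2 <|
        hF₁.differentiableAt (hstrip.mem_nhds (by simpa [neg_add_eq_sub] using h₂))
    exact ((DifferentiableAt.comp (g := conj ∘ F₁ ∘ conj) z hd₁ (by fun_prop)).mul
      (hF₂.differentiableAt (hstrip.mem_nhds h₁))).differentiableWithinAt
  have hper : ∀ t ∈ [[y / 2, y]], g (1 + t * I) = g (t * I) := by
    intro t ht
    obtain ⟨h₁, h₂⟩ := him t ht
    have h₁' : |((t : ℂ) * I).im| < R₀ := by simpa using h₁
    have h₂' : |(conj ((t : ℂ) * I - y * I)).im| < R₀ := by simpa [neg_add_eq_sub] using h₂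
    simp only [hg_def, comp_apply, add_comm (1 : ℂ), add_sub_right_comm, map_add, map_one,
      hper₁ _ h₂', hper₂ _ h₁']
  have hbot : ∀ x : ℝ,
      g (x + (y / 2 : ℝ) * I) = conj (F₁ (x + y * I / 2)) * F₂ (x + y * I / 2) := by
    intro x
    have e₁ : conj ((x : ℂ) + (y / 2 : ℝ) * I - y * I) = x + y * I / 2 := by
      simp only [map_sub, map_add, map_mul, conj_ofReal, conj_I]
      push_cast
      ring
    have e₂ : (x : ℂ) + (y / 2 : ℝ) * I = x + y * I / 2 := by push_cast; ring
    simp only [hg_def, comp_apply]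
    rw [e₁, e₂]
  have htop : ∀ x : ℝ, g (x + y * I) = conj (F₁ x) * F₂ (x + y * I) := by
    intro x
    simp only [hg_def, comp_apply, add_sub_cancel_right, conj_ofReal]
  simpa only [hbot, htop] using (integral_add_mul_I_eq_of_periodic hg hper).symm

theorem integral_integral_conj_mul_shift_mul_eq_half_shift {R₀ c d C : ℝ} {F₁ F₂ : ℂ → ℂ}
    (hF₁ : DifferentiableOn ℂ F₁ {z : ℂ | |z.im| < R₀})
    (hF₂ : DifferentiableOn ℂ F₂ {z : ℂ | |z.im| < R₀})
    (hper₁ : ∀ z : ℂ, |z.im| < R₀ → F₁ (z + 1) = F₁ z)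
    (hper₂ : ∀ z : ℂ, |z.im| < R₀ → F₂ (z + 1) = F₂ z) (hcd : ∀ y ∈ [[c, d]], |y| < R₀)
    {w : ℝ → ℂ} (hw : AEStronglyMeasurable w) (hwC : ∀ y, ‖w y‖ ≤ C) :
    ∫ x in (0 : ℝ)..1, ∫ y in c..d, conj (F₁ x) * F₂ (x + y * I) * w y
      = ∫ x in (0 : ℝ)..1, ∫ y in c..d, conj (F₁ (x + y * I / 2)) * F₂ (x + y * I / 2) * w y := by
  have hstrip : IsOpen {z : ℂ | |z.im| < R₀} := isOpen_lt (by fun_prop) continuous_const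
  have hcont : ∀ F : ℂ → ℂ, DifferentiableOn ℂ F {z : ℂ | |z.im| < R₀} →
      ∀ z : ℂ, |z.im| < R₀ → ContinuousAt F z := fun F hF z hz =>
    (hF.differentiableAt (hstrip.mem_nhds hz)).continuousAt
  have hG₁ : ContinuousOn (uncurry fun x y : ℝ => conj (F₁ x) * F₂ (x + y * I))
      ([[0, 1]] ×ˢ [[c, d]]) := by
    refine continuousOn_of_forall_continuousAt fun p hp => ?_
    have h₁ := hcont F₁ hF₁ p.1 (by simpa using (abs_nonneg c).trans_lt (hcd c left_mem_uIcc))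
    have h₂ := hcont F₂ hF₂ (p.1 + p.2 * I) (by simpa using hcd p.2 hp.2)
    fun_prop
  have hG₂ : ContinuousOn (uncurry fun x y : ℝ => conj (F₁ (x + y * I / 2)) * F₂ (x + y * I / 2))
      ([[0, 1]] ×ˢ [[c, d]]) := by
    refine continuousOn_of_forall_continuousAt fun p hp => ?_
    have hp' : |(p.1 + p.2 * I / 2 : ℂ).im| < R₀ := by
      have := hcd p.2 hp.2
      simp only [add_im, ofReal_im, div_ofNat_im, mul_im, ofReal_re, I_im, I_re, mul_one,
        mul_zero, add_zero, zero_add, abs_div, abs_two]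
      linarith [abs_nonneg p.2]
    have h₁ := hcont F₁ hF₁ _ hp'
    have h₂ := hcont F₂ hF₂ _ hp'
    fun_prop
  calc _ = ∫ y in c..d, ∫ x in (0 : ℝ)..1, conj (F₁ x) * F₂ (x + y * I) * w y :=
        intervalIntegral_swap_mul_of_continuousOn hG₁ hw hwC
    _ = ∫ y in c..d, ∫ x in (0 : ℝ)..1,
          conj (F₁ (x + y * I / 2)) * F₂ (x + y * I / 2) * w y :=
        intervalIntegral.integral_congr fun y hy => by
          simp only [intervalIntegral.integral_mul_const,
            integral_conj_mul_shift_eq_integral_conj_mul_half_shift hF₁ hF₂ hper₁ hper₂ (hcd y hy)]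
    _ = _ := (intervalIntegral_swap_mul_of_continuousOn hG₂ hw hwC).symm

theorem circle_holomorphic_change_of_variable_general (R₀ : ℝ)
    (F₁ F₂ : ℂ → ℂ)
    (hF₁ : DifferentiableOn ℂ F₁ {z : ℂ | |z.im| < R₀})
    (hF₂ : DifferentiableOn ℂ F₂ {z : ℂ | |z.im| < R₀})
    (hper₁ : ∀ z : ℂ, |z.im| < R₀ → F₁ (z + 1) = F₁ z)
    (hper₂ : ∀ z : ℂ, |z.im| < R₀ → F₂ (z + 1) = F₂ z)
    (α : ℝ → ℝ) (hαm : Measurable α) (hαb : ∃ C, ∀ y, |α y| ≤ C)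
    (R : ℝ) (hR : 0 < R) (hRR₀ : R < R₀ / 2) :
    (∫ x in (0 : ℝ)..1, (starRingEnd ℂ) (F₁ (x : ℂ)) *
        ∫ y in (-(2 * R))..(2 * R), F₂ ((x : ℂ) + (y : ℂ) * I) * (α y : ℂ))
      = ∫ x in (0 : ℝ)..1, ∫ y in (-(2 * R))..(2 * R),
          (starRingEnd ℂ) (F₁ ((x : ℂ) + (y : ℂ) * I / 2)) *
            F₂ ((x : ℂ) + (y : ℂ) * I / 2) * (α y : ℂ) := by
  obtain ⟨C, hC⟩ := hαb
  have habs : ∀ y ∈ [[-(2 * R), 2 * R]], |y| < R₀ := fun y hy =>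
    (abs_le.2 (by simpa [uIcc_of_le (by linarith : -(2 * R) ≤ 2 * R)] using hy)).trans_lt
      (by linarith)
  simp_rw [← intervalIntegral.integral_const_mul, ← mul_assoc]
  exact integral_integral_conj_mul_shift_mul_eq_half_shift hF₁ hF₂ hper₁ hper₂ habs
    (by fun_prop) fun y => by simpa using hC y

/-- Prototype holomorphic change of variable on the circle `ℝ/ℤ`: if `F₁, F₂` are
holomorphic and `1`-periodic on the strip `S_{R₀} = {|Im z| < R₀}` and `α` is bounded
and measurable, then for all `0 < R < R₀/2`,
`∫₀¹ conj(F₁(x)) ∫_{−2R}^{2R} F₂(x+iy) α(y) dy dx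
  = ∫₀¹ ∫_{−2R}^{2R} conj(F₁(x+iy/2)) F₂(x+iy/2) α(y) dy dx`. -/
theorem circle_holomorphic_change_of_variable (R₀ : ℝ) (hR₀ : 0 < R₀)
    (F₁ F₂ : ℂ → ℂ)
    (hF₁ : DifferentiableOn ℂ F₁ {z : ℂ | |z.im| < R₀})
    (hF₂ : DifferentiableOn ℂ F₂ {z : ℂ | |z.im| < R₀})
    (hper₁ : ∀ z : ℂ, |z.im| < R₀ → F₁ (z + 1) = F₁ z)
    (hper₂ : ∀ z : ℂ, |z.im| < R₀ → F₂ (z + 1) = F₂ z)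
    (α : ℝ → ℝ) (hαm : Measurable α) (hαb : ∃ C, ∀ y, |α y| ≤ C)
    (R : ℝ) (hR : 0 < R) (hRR₀ : R < R₀ / 2) :
    (∫ x in (0 : ℝ)..1, (starRingEnd ℂ) (F₁ (x : ℂ)) *
        ∫ y in (-(2 * R))..(2 * R), F₂ ((x : ℂ) + (y : ℂ) * I) * (α y : ℂ))
      = ∫ x in (0 : ℝ)..1, ∫ y in (-(2 * R))..(2 * R),
          (starRingEnd ℂ) (F₁ ((x : ℂ) + (y : ℂ) * I / 2)) *
            F₂ ((x : ℂ) + (y : ℂ) * I / 2) * (α y : ℂ) :=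
  circle_holomorphic_change_of_variable_general R₀ F₁ F₂ hF₁ hF₂ hper₁ hper₂ α hαm hαb R hR hRR₀
end

section
/- Let H be a Hilbert space and (ψ_n) an orthonormal basis. Suppose (c_n) is a sequence of strictly positive reals, and let V ⊆ H be a Hilbert space continuously containing each ψ_n, with inner product satisfying ⟨F, ψ_n⟩_V = c_n ⟨rF, ψ_n⟩_H for every F ∈ V, where r : V → H is a bounded injective linear 'restriction' map. Then the ψ_n are mutually orthogonal in V, and if F ∈ V is orthogonal in V to every ψ_n, then F = 0; consequently the (normalized) ψ_n form an orthogonal basis of the closed span condition: their V-span is dense in V. -/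
/-!
Pairing with `ψV n` in `V` is, up to the nonzero factor `c n`, pairing the restriction with `ψ n`
in `H`. Hence `F ⟂ ψV n` for all `n` forces `r F ⟂ ψ n` for all `n`, so `r F = 0` by totality of
`(ψ n)`, and `F = 0` by injectivity of `r`. In the Hilbert space `V` a family with trivial
orthogonal complement has dense span; orthogonality of the `ψV n` is the same identity applied
to `F = ψV n`.
-/

section

open Submodule Set

variable {𝕜 E F ι : Type*} [RCLike 𝕜]
  [NormedAddCommGroup E] [InnerProductSpace 𝕜 E] [NormedAddCommGroup F] [InnerProductSpace 𝕜 F]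

local notation "⟪" x ", " y "⟫" => inner 𝕜 x y

theorem Submodule.mem_orthogonal_span_range_iff {v : ι → E} {x : E} :
    x ∈ (span 𝕜 (range v))ᗮ ↔ ∀ i, ⟪x, v i⟫ = 0 := by
  rw [← span_singleton_le_iff_mem, ← isOrtho_iff_le, isOrtho_span]
  simp

theorem eq_zero_of_forall_inner_eq_zero_of_closure_span_eq_top {v : ι → E}
    (hv : (span 𝕜 (range v)).topologicalClosure = ⊤) {x : E} (hx : ∀ i, ⟪x, v i⟫ = 0) :
    x = 0 := by
  have hx' : x ∈ (span 𝕜 (range v))ᗮ := mem_orthogonal_span_range_iff.2 hx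
  rwa [← orthogonal_closure, hv, top_orthogonal_eq_bot, mem_bot] at hx'

theorem closure_span_eq_top_of_forall_inner_eq_zero [CompleteSpace E] {v : ι → E}
    (hv : ∀ x, (∀ i, ⟪x, v i⟫ = 0) → x = 0) :
    (span 𝕜 (range v)).topologicalClosure = ⊤ :=
  topologicalClosure_eq_top_iff.2 <| eq_bot_iff.2 fun x hx =>
    (mem_bot 𝕜).2 <| hv x (mem_orthogonal_span_range_iff.1 hx)

theorem eq_zero_of_forall_inner_eq_zero_of_inner_eq_mul_inner (r : E →ₗ[𝕜] F)
    (hr : Function.Injective r) {u : ι → E} {v : ι → F}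
    (hv : (span 𝕜 (range v)).topologicalClosure = ⊤) {c : ι → 𝕜} (hc : ∀ i, c i ≠ 0)
    (hinner : ∀ x i, ⟪x, u i⟫ = c i * ⟪r x, v i⟫) {x : E} (hx : ∀ i, ⟪x, u i⟫ = 0) :
    x = 0 := by
  have hrx : r x = 0 := eq_zero_of_forall_inner_eq_zero_of_closure_span_eq_top hv fun i =>
    (mul_eq_zero.1 ((hinner x i).symm.trans (hx i))).resolve_left (hc i)
  exact (map_eq_zero_iff r hr).1 hrx

end

theorem analytic_continuation_orthogonal_basis_general
    {H V : Type*} [NormedAddCommGroup H] [InnerProductSpace ℂ H]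
    [NormedAddCommGroup V] [InnerProductSpace ℂ V] [CompleteSpace V]
    (ψ : ℕ → H) (hψ : Orthonormal ℂ ψ)
    (htotal : (Submodule.span ℂ (Set.range ψ)).topologicalClosure = ⊤)
    (r : V →L[ℂ] H) (hr : Function.Injective r)
    (ψV : ℕ → V) (hrψ : ∀ n, r (ψV n) = ψ n)
    (c : ℕ → ℝ) (hc : ∀ n, 0 < c n)
    (hinner : ∀ (F : V) (n : ℕ), (inner ℂ F (ψV n) : ℂ) = (c n : ℂ) * (inner ℂ (r F) (ψ n) : ℂ)) :
    (∀ n m, n ≠ m → (inner ℂ (ψV n) (ψV m) : ℂ) = 0) ∧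
      (∀ F : V, (∀ n, (inner ℂ F (ψV n) : ℂ) = 0) → F = 0) ∧
      (Submodule.span ℂ (Set.range ψV)).topologicalClosure = ⊤ := by
  have hvanish : ∀ F : V, (∀ n, (inner ℂ F (ψV n) : ℂ) = 0) → F = 0 := fun F hF =>
    eq_zero_of_forall_inner_eq_zero_of_inner_eq_mul_inner r.toLinearMap hr htotal
      (fun n => Complex.ofReal_ne_zero.2 (hc n).ne') hinner hF
  refine ⟨fun n m hnm => ?_, hvanish, closure_span_eq_top_of_forall_inner_eq_zero hvanish⟩
  rw [hinner, hrψ, hψ.2 hnm, mul_zero]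

/-- Abstract version of the lemma that the analytically continued eigenfunctions form
an orthogonal basis of the holomorphic `L²` space: if `(ψ_n)` is an orthonormal basis
of `H`, `r : V → H` is a bounded injective restriction map with `r ψVₙ = ψₙ`, `cₙ > 0`,
and `⟨F, ψVₙ⟩_V = cₙ ⟨rF, ψₙ⟩_H` for all `F ∈ V`, then the `ψVₙ` are mutually
orthogonal in `V`, any `F ∈ V` orthogonal to all of them vanishes, and their span is
dense in `V`. -/
theorem analytic_continuation_orthogonal_basis
    {H V : Type*} [NormedAddCommGroup H] [InnerProductSpace ℂ H] [CompleteSpace H]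
    [NormedAddCommGroup V] [InnerProductSpace ℂ V] [CompleteSpace V]
    (ψ : ℕ → H) (hψ : Orthonormal ℂ ψ)
    (htotal : (Submodule.span ℂ (Set.range ψ)).topologicalClosure = ⊤)
    (r : V →L[ℂ] H) (hr : Function.Injective r)
    (ψV : ℕ → V) (hrψ : ∀ n, r (ψV n) = ψ n)
    (c : ℕ → ℝ) (hc : ∀ n, 0 < c n)
    (hinner : ∀ (F : V) (n : ℕ), (inner ℂ F (ψV n) : ℂ) = (c n : ℂ) * (inner ℂ (r F) (ψ n) : ℂ)) :
    (∀ n m, n ≠ m → (inner ℂ (ψV n) (ψV m) : ℂ) = 0) ∧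
      (∀ F : V, (∀ n, (inner ℂ F (ψV n) : ℂ) = 0) → F = 0) ∧
      (Submodule.span ℂ (Set.range ψV)).topologicalClosure = ⊤ :=
  analytic_continuation_orthogonal_basis_general ψ hψ htotal r hr ψV hrψ c hc hinner
end
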